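/- Let p be a prime and k ≥ 2, and let P be the two-weight code of length p^{k-1} over Z_p generated by the matrix A whose first row is all ones and whose remaining rows form a matrix B with all distinct vectors of Z_p^{k-1} as columns. Then the weight enumerator of P is W_P(X,Y) = X^{p^{k-1}} + (p^k - p)·X^{p^{k-2}}·Y^{(p-1)p^{k-2}} + (p-1)·Y^{p^{k-1}}, where W_P(X,Y) = Σ_{c∈P} X^{n−wt(c)} Y^{wt(c)} with n = p^{k-1}. -/

import Mathlib

/-!
Write `K = Z_p`, `q = p` and `m = k - 1`. Because the columns of `B` run through all of `K^m`,
the codeword `a • 1 + v B` is, up to a permutation of coordinates, the table of values of the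
affine function `x ↦ a + v ⬝ᵥ x` on `K^m`. For `v ≠ 0` this function vanishes exactly on an
affine hyperplane of `q^(m-1)` points, so the weight is `(q - 1) q^(m-1)`; for `v = 0` the
codeword is constant, giving the zero word and `q - 1` words of full weight. Only `a = 0, v = 0`
gives weight zero, so the codewords are in bijection with the pairs `(a, v)`.
-/

open Finset Matrix Module

section

variable {K : Type*} [Field K] [Fintype K] [DecidableEq K]

theorem Module.Dual.card_fiber_of_ne_zero {V : Type*} [AddCommGroup V] [Module K V] [Fintype V]
    {f : Module.Dual K V} (hf : f ≠ 0) (c : K) :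
    #{x | f x = c} = Fintype.card K ^ (finrank K V - 1) := by
  obtain ⟨x₀, rfl⟩ := LinearMap.surjective_iff_ne_zero.2 hf c
  have hker := Module.Dual.finrank_ker_add_one_of_ne_zero hf
  calc #{x | f x = f x₀}
      = #{x | f x = 0} := card_equiv (Equiv.subRight x₀) fun x => by simp [sub_eq_zero]
    _ = Nat.card {x // f x = 0} := by rw [Nat.card_eq_fintype_card, Fintype.card_subtype]
    _ = Nat.card (LinearMap.ker f) := rfl
    _ = Fintype.card K ^ (finrank K V - 1) := by
        rw [Module.natCard_eq_pow_finrank (K := K), Nat.card_eq_fintype_card]; congr 1; omega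

variable {m : ℕ}

def affineWeight (a : K) (v : Fin m → K) : ℕ := #{x : Fin m → K | a + v ⬝ᵥ x ≠ 0}

theorem affineWeight_zero_right (a : K) :
    affineWeight a (0 : Fin m → K) = if a = 0 then 0 else Fintype.card K ^ m := by
  split_ifs with ha <;> simp [affineWeight, ha]

theorem affineWeight_of_ne_zero (a : K) {v : Fin m → K} (hv : v ≠ 0) :
    affineWeight a v = (Fintype.card K - 1) * Fintype.card K ^ (m - 1) := by
  obtain _ | m := m
  · exact absurd (Subsingleton.elim v 0) hv
  have hzeros : #{x : Fin (m + 1) → K | a + v ⬝ᵥ x = 0} = Fintype.card K ^ m := by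
    have := (dotProductEquiv K (Fin (m + 1))).map_ne_zero_iff.2 hv
    simpa [← eq_neg_iff_add_eq_zero, add_comm a] using Module.Dual.card_fiber_of_ne_zero this (-a)
  rw [affineWeight, filter_not, card_sdiff_of_subset (filter_subset _ _), hzeros, card_univ,
    Fintype.card_fun, Fintype.card_fin, Nat.sub_one_mul, ← pow_succ', Nat.add_sub_cancel]

theorem affineWeight_eq_zero_iff {a : K} {v : Fin m → K} :
    affineWeight a v = 0 ↔ a = 0 ∧ v = 0 := by
  by_cases hv : v = 0
  · simp [hv, affineWeight_zero_right]
  · have := Fintype.one_lt_card (α := K)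
    simp [hv, affineWeight_of_ne_zero a hv]
    omega

theorem sum_sum_affineWeight {M : Type*} [AddCommMonoid M] (F : ℕ → M) :
    ∑ a : K, ∑ v : Fin m → K, F (affineWeight a v)
      = F 0 + (Fintype.card K ^ (m + 1) - Fintype.card K) •
          F ((Fintype.card K - 1) * Fintype.card K ^ (m - 1))
        + (Fintype.card K - 1) • F (Fintype.card K ^ m) := by
  have hinner (a : K) : ∑ v : Fin m → K, F (affineWeight a v)
      = F (affineWeight a (0 : Fin m → K)) + (Fintype.card K ^ m - 1) •
          F ((Fintype.card K - 1) * Fintype.card K ^ (m - 1)) := by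
    rw [Fintype.sum_eq_add_sum_compl 0, sum_congr rfl fun v hv =>
      congrArg F (affineWeight_of_ne_zero a (by simpa using hv))]
    simp [card_compl]
  have hconst : ∑ a : K, F (affineWeight a (0 : Fin m → K))
      = F 0 + (Fintype.card K - 1) • F (Fintype.card K ^ m) := by
    rw [Fintype.sum_eq_add_sum_compl 0, sum_congr rfl fun a ha =>
      congrArg F ((affineWeight_zero_right a).trans (if_neg (by simpa using ha)))]
    simp [card_compl, affineWeight_zero_right]
  rw [sum_congr rfl fun a _ => hinner a, sum_add_distrib, hconst, sum_const, card_univ, smul_smul,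
    Nat.mul_sub_one, ← pow_succ']
  abel

variable {ι : Type*} [Fintype ι] {A : Fin (m + 1) → ι → K}

theorem hammingNorm_linearCombination_cons (hA0 : A 0 = 1)
    (hB : Function.Bijective fun j (i : Fin m) => A i.succ j) (a : K) (v : Fin m → K) :
    hammingNorm (Fintype.linearCombination K A (Fin.cons a v)) = affineWeight a v := by
  let e := Equiv.ofBijective _ hB
  have hc (j : ι) : Fintype.linearCombination K A (Fin.cons a v) j = a + v ⬝ᵥ e j := by
    simp [Fintype.linearCombination_apply, Fin.sum_univ_succ, hA0, dotProduct, e, mul_comm]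
  exact card_equiv e fun j => by simp [hc]

theorem injective_linearCombination (hA0 : A 0 = 1)
    (hB : Function.Bijective fun j (i : Fin m) => A i.succ j) :
    Function.Injective (Fintype.linearCombination K A) := by
  rw [← LinearMap.ker_eq_bot, LinearMap.ker_eq_bot']
  intro d hd
  have hwt := hammingNorm_linearCombination_cons hA0 hB (d 0) (Fin.tail d)
  rw [Fin.cons_self_tail, hd, hammingNorm_zero, eq_comm, affineWeight_eq_zero_iff] at hwt
  rw [← Fin.cons_self_tail d, hwt.1, hwt.2]
  exact Matrix.cons_zero_zero

theorem finsum_mem_span_hammingNorm {M : Type*} [AddCommMonoid M] (F : ℕ → M) (hA0 : A 0 = 1)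
    (hB : Function.Bijective fun j (i : Fin m) => A i.succ j) :
    ∑ᶠ c ∈ (Submodule.span K (Set.range A) : Set (ι → K)), F (hammingNorm c)
      = ∑ a : K, ∑ v : Fin m → K, F (affineWeight a v) := by
  calc _ = ∑ d, F (hammingNorm (Fintype.linearCombination K A d)) := by
        rw [← Fintype.range_linearCombination, LinearMap.coe_range,
          finsum_mem_range (injective_linearCombination hA0 hB), finsum_eq_sum_of_fintype]
    _ = ∑ av : K × (Fin m → K),
          F (hammingNorm (Fintype.linearCombination K A (Fin.cons av.1 av.2))) :=
        (Fintype.sum_equiv (Fin.consEquiv fun _ => K) _ _ fun _ => rfl).symm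
    _ = _ := by simp only [Fintype.sum_prod_type, hammingNorm_linearCombination_cons hA0 hB]

end

/-- the weight enumerator of the two-weight code `P` is
`X^(p^(k-1)) + (p^k - p)·X^(p^(k-2))·Y^((p-1)p^(k-2)) + (p-1)·Y^(p^(k-1))`. -/
theorem stmt1 (p k : ℕ) (hp : p.Prime) (hk : 2 ≤ k)
    (A : Fin k → Fin (p ^ (k - 1)) → ZMod p)
    (hrow0 : ∀ j, A ⟨0, by omega⟩ j = 1)
    (hB : Function.Bijective
      (fun (j : Fin (p ^ (k - 1))) => fun (i : Fin (k - 1)) => A ⟨i.val + 1, by omega⟩ j))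
    (P : Submodule (ZMod p) (Fin (p ^ (k - 1)) → ZMod p))
    (hP : P = Submodule.span (ZMod p) (Set.range A))
    (R : Type*) [CommRing R] (X Y : R) :
    ∑ᶠ c ∈ (P : Set (Fin (p ^ (k - 1)) → ZMod p)),
        X ^ (p ^ (k - 1) - hammingNorm c) * Y ^ (hammingNorm c)
      = X ^ (p ^ (k - 1))
        + (p ^ k - p : ℕ) * (X ^ (p ^ (k - 2)) * Y ^ ((p - 1) * p ^ (k - 2)))
        + (p - 1 : ℕ) * Y ^ (p ^ (k - 1)) := by
  have : Fact p.Prime := ⟨hp⟩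
  obtain ⟨m, rfl⟩ : ∃ m, k = m + 2 := ⟨k - 2, by omega⟩
  have hsub : p ^ (m + 1) - (p - 1) * p ^ m = p ^ m := by
    rw [Nat.sub_one_mul, ← pow_succ', Nat.sub_sub_self (Nat.pow_le_pow_right hp.pos m.le_succ)]
  subst hP
  rw [finsum_mem_span_hammingNorm (fun w => X ^ (p ^ (m + 2 - 1) - w) * Y ^ w) (funext hrow0) hB,
    sum_sum_affineWeight (fun w => X ^ (p ^ (m + 2 - 1) - w) * Y ^ w), ZMod.card]
  simp [hsub, nsmul_eq_mul]
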